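/- The minimum of the cost c over the feasible set F has the following piecewise form: if a²·Δb/(b·Δt) ≤ N ≤ min(T̃²·b·Δt/Δb, (a + b·B̃)²·Δb/(b·Δt)) then the minimum equals 2·√(N·Δt·Δb/b) − a·Δb/b, while if max(a·T̃, T̃²·b·Δt/Δb) ≤ N ≤ a·T̃ + b·T̃·B̃ then the minimum equals Δt·T̃ + Δb·(N − a·T̃)/(b·T̃). -/

import Mathlib

/-!
On the constraint `a·x + b·x·y = N` the frequency is determined by the time,
`y = (N - a·x)/(b·x)`, and the cost becomes `Δt·x + q/x - a·Δb/b` with `q = Δb·N/b`.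
The function `x ↦ Δt·x + q/x` attains its minimum `2√(Δt·q)` at `x₀ = √(q/Δt)` (AM-GM) and is
decreasing on `(0, x₀]`. In the first regime `x₀` itself is a feasible time; in the second
`T̃ ≤ x₀`, so the cheapest feasible time is the largest one, `T̃`.
-/

/-- The feasible set
`F = {(x, y) : 0 < x ≤ T̃, 0 ≤ y ≤ B̃, a·x + b·x·y = N}`. -/
def feasibleSet (a b N T B : ℝ) : Set (ℝ × ℝ) :=
  {p : ℝ × ℝ | 0 < p.1 ∧ p.1 ≤ T ∧ 0 ≤ p.2 ∧ p.2 ≤ B ∧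
    a * p.1 + b * p.1 * p.2 = N}

/-- The resource-cost objective `c(x, y) = Δt·x + Δb·y`. -/
def resourceCost (Δt Δb : ℝ) (p : ℝ × ℝ) : ℝ :=
  Δt * p.1 + Δb * p.2

section MulAddDiv

variable {p q x y : ℝ}

theorem two_sqrt_mul_le_mul_add_div (hp : 0 ≤ p) (hq : 0 ≤ q) (hx : 0 < x) :
    2 * √(p * q) ≤ p * x + q / x := calc
  2 * √(p * q) = 2 * √(p * x) * √(q / x) := by
    rw [mul_assoc, ← Real.sqrt_mul (by positivity)]
    field_simp
  _ ≤ √(p * x) ^ 2 + √(q / x) ^ 2 := two_mul_le_add_sq _ _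
  _ = p * x + q / x := by rw [Real.sq_sqrt (by positivity), Real.sq_sqrt (by positivity)]

theorem mul_sqrt_div_add_div_sqrt_div (hp : 0 < p) (hq : 0 < q) :
    p * √(q / p) + q / √(q / p) = 2 * √(p * q) := by
  set r := √(q / p) with hr
  have hr_pos : 0 < r := Real.sqrt_pos.mpr (by positivity)
  have hq_eq : q = p * r ^ 2 := by
    rw [hr, Real.sq_sqrt (by positivity)]
    field_simp
  have hsqrt : √(p * q) = p * r := by
    rw [hq_eq, show p * (p * r ^ 2) = (p * r) ^ 2 by ring, Real.sqrt_sq (by positivity)]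
  rw [hsqrt, hq_eq]
  field_simp
  ring

theorem mul_add_div_le_mul_add_div_of_le (hp : 0 ≤ p) (hx : 0 < x) (hxy : x ≤ y)
    (hy : p * y ^ 2 ≤ q) : p * y + q / y ≤ p * x + q / x := by
  have hy_pos : 0 < y := hx.trans_le hxy
  have hdiff : p * x + q / x - (p * y + q / y) = (y - x) * (q - p * x * y) / (x * y) := by
    field_simp
    ring
  have hpxy : p * x * y ≤ q := by
    nlinarith [mul_le_mul_of_nonneg_left hxy (mul_nonneg hp hy_pos.le)]
  have hnonneg : 0 ≤ (y - x) * (q - p * x * y) / (x * y) := by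
    apply div_nonneg (mul_nonneg _ _) (by positivity) <;> linarith
  linarith

end MulAddDiv

section Feasible

variable {Δt Δb a b N T B x : ℝ}

theorem snd_eq_of_mem_feasibleSet (hb : b ≠ 0) {p : ℝ × ℝ} (hp : p ∈ feasibleSet a b N T B) :
    p.2 = (N - a * p.1) / (b * p.1) := by
  obtain ⟨hx, -, -, -, hN⟩ := hp
  field_simp
  linarith

theorem mk_mem_feasibleSet (hb : 0 < b) (hx : 0 < x) (hxT : x ≤ T) (hxN : a * x ≤ N)
    (hNx : N ≤ (a + b * B) * x) :
    (x, (N - a * x) / (b * x)) ∈ feasibleSet a b N T B := by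
  have hbx : 0 < b * x := mul_pos hb hx
  refine ⟨hx, hxT, div_nonneg (by linarith) hbx.le, ?_, ?_⟩
  · rw [div_le_iff₀ hbx]
    linarith
  · dsimp only
    field_simp
    ring

theorem resourceCost_mk (hb : b ≠ 0) (hx : x ≠ 0) :
    resourceCost Δt Δb (x, (N - a * x) / (b * x)) = Δt * x + Δb * N / b / x - a * Δb / b := by
  simp only [resourceCost]
  field_simp
  ring

theorem isLeast_resourceCost_image_of_forall_le {x₀ : ℝ} (hb : 0 < b) (hx₀ : 0 < x₀) (hx₀T : x₀ ≤ T)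
    (hx₀N : a * x₀ ≤ N) (hNx₀ : N ≤ (a + b * B) * x₀)
    (hmin : ∀ x, 0 < x → x ≤ T → Δt * x₀ + Δb * N / b / x₀ ≤ Δt * x + Δb * N / b / x) :
    IsLeast (resourceCost Δt Δb '' feasibleSet a b N T B)
      (Δt * x₀ + Δb * N / b / x₀ - a * Δb / b) := by
  refine ⟨⟨_, mk_mem_feasibleSet hb hx₀ hx₀T hx₀N hNx₀, resourceCost_mk hb.ne' hx₀.ne'⟩, ?_⟩
  rintro _ ⟨p, hp, rfl⟩
  have hp_eq : p = (p.1, (N - a * p.1) / (b * p.1)) :=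
    Prod.ext rfl (snd_eq_of_mem_feasibleSet hb.ne' hp)
  rw [hp_eq, resourceCost_mk hb.ne' hp.1.ne']
  linarith [hmin p.1 hp.1 hp.2.1]

theorem isLeast_resourceCost_image_two_sqrt (hΔt : 0 < Δt) (hΔb : 0 < Δb) (ha : 0 ≤ a)
    (hb : 0 < b) (hN : 0 < N) (hT : 0 ≤ T) (hB : 0 ≤ B)
    (hlow : a ^ 2 * Δb / (b * Δt) ≤ N) (hT_high : N ≤ T ^ 2 * b * Δt / Δb)
    (hB_high : N ≤ (a + b * B) ^ 2 * Δb / (b * Δt)) :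
    IsLeast (resourceCost Δt Δb '' feasibleSet a b N T B)
      (2 * √(N * Δt * Δb / b) - a * Δb / b) := by
  set q := Δb * N / b with hq
  have hq_pos : 0 < q := by positivity
  set x₀ := √(q / Δt)
  have hx₀_pos : 0 < x₀ := Real.sqrt_pos.mpr (by positivity)
  have hx₀_sq : x₀ ^ 2 = q / Δt := Real.sq_sqrt (by positivity)
  have hx₀T : x₀ ^ 2 ≤ T ^ 2 := by
    rw [hx₀_sq, div_le_iff₀ hΔt, hq, div_le_iff₀ hb]
    rw [le_div_iff₀ hΔb] at hT_high
    linarith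
  have hx₀N : (a * x₀) ^ 2 ≤ N ^ 2 := calc
    (a * x₀) ^ 2 = a ^ 2 * Δb / (b * Δt) * N := by rw [mul_pow, hx₀_sq, hq]; field_simp
    _ ≤ N * N := mul_le_mul_of_nonneg_right hlow hN.le
    _ = N ^ 2 := (sq N).symm
  have hNx₀ : N ^ 2 ≤ ((a + b * B) * x₀) ^ 2 := calc
    N ^ 2 = N * N := sq N
    _ ≤ (a + b * B) ^ 2 * Δb / (b * Δt) * N := mul_le_mul_of_nonneg_right hB_high hN.le
    _ = ((a + b * B) * x₀) ^ 2 := by rw [mul_pow, hx₀_sq, hq]; field_simp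
  have hmin : Δt * x₀ + q / x₀ = 2 * √(Δt * q) := mul_sqrt_div_add_div_sqrt_div hΔt hq_pos
  have hvalue : 2 * √(Δt * q) = 2 * √(N * Δt * Δb / b) := by rw [hq]; ring_nf
  rw [← hvalue, ← hmin]
  exact isLeast_resourceCost_image_of_forall_le hb hx₀_pos (abs_le_of_sq_le_sq' hx₀T hT).2
    (abs_le_of_sq_le_sq' hx₀N hN.le).2 (abs_le_of_sq_le_sq' hNx₀ (by positivity)).2
    fun x hx _ ↦ hmin ▸ two_sqrt_mul_le_mul_add_div hΔt.le hq_pos.le hx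

theorem isLeast_resourceCost_image_time_budget (hΔt : 0 < Δt) (hΔb : 0 < Δb) (hb : 0 < b)
    (hT : 0 < T) (haT : a * T ≤ N) (hT_low : T ^ 2 * b * Δt / Δb ≤ N)
    (hB_high : N ≤ a * T + b * T * B) :
    IsLeast (resourceCost Δt Δb '' feasibleSet a b N T B)
      (Δt * T + Δb * (N - a * T) / (b * T)) := by
  have hTx₀ : Δt * T ^ 2 ≤ Δb * N / b := by
    rw [le_div_iff₀ hb]
    rw [div_le_iff₀ hΔb] at hT_low
    linarith
  have hvalue : Δt * T + Δb * N / b / T - a * Δb / b = Δt * T + Δb * (N - a * T) / (b * T) := by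
    field_simp
    ring
  rw [← hvalue]
  exact isLeast_resourceCost_image_of_forall_le hb hT le_rfl haT (by linarith)
    fun x hx hxT ↦ mul_add_div_le_mul_add_div_of_le hΔt.le hx hxT hTx₀

end Feasible

/-- Piecewise form of the minimum of `c` over `F`:
if `a²·Δb/(b·Δt) ≤ N ≤ min(T̃²·b·Δt/Δb, (a + b·B̃)²·Δb/(b·Δt))` the minimum
equals `2·√(N·Δt·Δb/b) − a·Δb/b`; if
`max(a·T̃, T̃²·b·Δt/Δb) ≤ N ≤ a·T̃ + b·T̃·B̃` the minimum equals
`Δt·T̃ + Δb·(N − a·T̃)/(b·T̃)`. -/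
theorem piecewise_minimum_cost
    (Δt Δb a b N T B : ℝ) (hΔt : 0 < Δt) (hΔb : 0 < Δb)
    (ha : 0 < a) (hb : 0 < b) (hN : 0 < N) (hT : 0 < T) (hB : 0 < B) :
    ((a ^ 2 * Δb / (b * Δt) ≤ N →
      N ≤ min (T ^ 2 * b * Δt / Δb) ((a + b * B) ^ 2 * Δb / (b * Δt)) →
      IsLeast (resourceCost Δt Δb '' feasibleSet a b N T B)
        (2 * Real.sqrt (N * Δt * Δb / b) - a * Δb / b)) ∧
     (max (a * T) (T ^ 2 * b * Δt / Δb) ≤ N → N ≤ a * T + b * T * B →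
      IsLeast (resourceCost Δt Δb '' feasibleSet a b N T B)
        (Δt * T + Δb * (N - a * T) / (b * T)))) := by
  rw [le_min_iff, max_le_iff]
  exact ⟨fun hlow ⟨hT_high, hB_high⟩ ↦ isLeast_resourceCost_image_two_sqrt hΔt hΔb ha.le hb hN
      hT.le hB.le hlow hT_high hB_high,
    fun ⟨haT, hT_low⟩ hB_high ↦ isLeast_resourceCost_image_time_budget hΔt hΔb hb hT haT hT_low
      hB_high⟩
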